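/- arXiv:2210.13065 — 2 statements merged into one kernel-verified Lean document; each statement's English description precedes it below -/
import Mathlib

section
/- Let (D,v) be a positive cooperative game. Then for every nonempty subset A ⊆ D, the inverse of the ratio potential admits the permutation expansion R(A,v)^{-1} = Σ_{π ∈ S_A} Π_{j=1}^{|A|} v(C_j(π))^{-1}, where S_A is the set of permutations of A. Consequently, for every i ∈ D, PV_i(D,v) = (Σ_{π ∈ S_{D\{i}}} Π_{j=1}^{d−1} v(C_j(π))^{-1}) / (Σ_{σ ∈ S_D} Π_{j=1}^{d} v(C_j(σ))^{-1}). -/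
open Finset

/-- The ratio potential `R(A, v)` of a cooperative game, defined recursively by
`R(∅, v) = 1` and `R(A, v) = v(A) · (Σ_{j∈A} R(A\{j}, v)⁻¹)⁻¹` for nonempty `A`. -/
noncomputable def ratioPot {d : ℕ} (v : Finset (Fin d) → ℝ) (A : Finset (Fin d)) : ℝ :=
  if A = ∅ then 1
  else v A * (∑ j ∈ A.attach, (ratioPot v (A.erase j.1))⁻¹)⁻¹
termination_by A.card
decreasing_by exact Finset.card_erase_lt_of_mem j.2

/-- `C_j(e)`: the coalition made of the first `j` players in the ordering `e` of the
coalition `A` (an ordering of `A` being a bijection `Fin |A| ≃ A`). -/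
def subPermCoal {d : ℕ} (A : Finset (Fin d)) (e : Fin A.card ≃ {x // x ∈ A}) (j : ℕ) :
    Finset (Fin d) :=
  (Finset.univ.filter (fun k : Fin A.card => (k : ℕ) < j)).image (fun k => (e k : Fin d))

/-! Splitting an ordering of `A` at its last element `a`, the last prefix coalition is `A` itself
and the earlier ones are the prefixes of an ordering of `A \ {a}`. Hence the permutation sum
`S(A) = Σ_π Π_j v(C_j(π))⁻¹` satisfies `S(A) = v(A)⁻¹ · Σ_{a ∈ A} S(A \ {a})` and `S(∅) = 1`,
which is the recursion defining `R(A, v)⁻¹`; strong induction on `A` gives the expansion. The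
formula for the proportional value follows from `R(D)/R(D \ {i}) = R(D \ {i})⁻¹ / R(D)⁻¹`. -/

section Orderings

variable {β : Type*} [DecidableEq β]

def prefixImage {n : ℕ} (f : Fin n → β) (j : ℕ) : Finset β :=
  (univ.filter fun k : Fin n => (k : ℕ) < j).image f

lemma prefixImage_self {n : ℕ} (f : Fin n → β) : prefixImage f n = univ.image f := by
  simp [prefixImage]

lemma prefixImage_castSucc {n j : ℕ} (f : Fin (n + 1) → β) (hj : j ≤ n) :
    prefixImage f j = prefixImage (f ∘ Fin.castSucc) j := by
  ext x
  simp only [prefixImage, mem_image, mem_filter, mem_univ, true_and, Function.comp_apply]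
  constructor
  · rintro ⟨k, hk, rfl⟩
    exact ⟨⟨k, by omega⟩, hk, rfl⟩
  · rintro ⟨k, hk, rfl⟩
    exact ⟨k.castSucc, hk, rfl⟩

def orderingWeight {M : Type*} [CommMonoid M] (w : Finset β → M) {n : ℕ} (f : Fin n → β) : M :=
  ∏ j ∈ range n, w (prefixImage f (j + 1))

lemma orderingWeight_succ {M : Type*} [CommMonoid M] (w : Finset β → M) {n : ℕ}
    (f : Fin (n + 1) → β) :
    orderingWeight w f = orderingWeight w (f ∘ Fin.castSucc) * w (univ.image f) := by
  rw [orderingWeight, prod_range_succ, prefixImage_self, orderingWeight]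
  congr 1
  refine prod_congr rfl fun j hj => ?_
  rw [prefixImage_castSucc f (by rw [mem_range] at hj; omega)]

end Orderings

section ExtendLast

variable {α : Type*} [DecidableEq α] {n : ℕ}

def finSuccEquivOfLast (a : α) (e : Fin n ≃ {y // y ≠ a}) : Fin (n + 1) ≃ α :=
  finSuccEquivLast.trans ((Equiv.optionSubtype a).symm e).1

@[simp]
lemma finSuccEquivOfLast_castSucc (a : α) (e : Fin n ≃ {y // y ≠ a}) (k : Fin n) :
    finSuccEquivOfLast a e k.castSucc = e k := by
  simp [finSuccEquivOfLast, Equiv.optionSubtype_symm_apply_apply_coe]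

lemma Fintype.sum_equiv_finSucc [Fintype α] {N : Type*} [AddCommMonoid N]
    (f : (Fin (n + 1) ≃ α) → N) :
    ∑ e, f e = ∑ a, ∑ e : Fin n ≃ {y // y ≠ a}, f (finSuccEquivOfLast a e) := by
  let E : (Σ a, Fin n ≃ {y // y ≠ a}) ≃ (Fin (n + 1) ≃ α) :=
    (Equiv.sigmaCongrRight fun a => (Equiv.optionSubtype a).symm).trans
      ((Equiv.sigmaFiberEquiv fun e : Option (Fin n) ≃ α => e none).trans
        (finSuccEquivLast.symm.equivCongr (Equiv.refl α)))
  rw [← Fintype.sum_equiv E _ _ fun _ => rfl, Fintype.sum_sigma]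
  rfl

end ExtendLast

section OrderingSum

variable {β M : Type*} [DecidableEq β] [CommSemiring M]

def orderingSum (w : Finset β → M) (A : Finset β) : M :=
  ∑ e : Fin A.card ≃ A, orderingWeight w fun k => (e k : β)

lemma orderingSum_eq_sum_equiv {α : Type*} [Fintype α] [DecidableEq α] (w : Finset β → M)
    (A : Finset β) (g : α ≃ A) {n : ℕ} (hn : A.card = n) :
    orderingSum w A = ∑ e : Fin n ≃ α, orderingWeight w fun k => (g (e k) : β) := by
  subst hn
  exact Fintype.sum_equiv (Equiv.equivCongr (Equiv.refl _) g.symm) _ _ fun e => by simp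

@[simp]
lemma orderingSum_empty (w : Finset β → M) : orderingSum w ∅ = 1 := by
  rw [orderingSum_eq_sum_equiv w ∅ (Equiv.refl _) card_empty]
  simp [orderingWeight, Fintype.card_equiv (Equiv.equivOfIsEmpty (Fin 0) (∅ : Finset β))]

lemma image_val_equiv_univ {n : ℕ} (A : Finset β) (e : Fin n ≃ A) :
    univ.image (fun k => (e k : β)) = A := by
  rw [show (fun k => (e k : β)) = Subtype.val ∘ e from rfl, ← image_image, image_univ_equiv,
    univ_eq_attach, attach_image_val]

def subtypeNeEquivErase (A : Finset β) (a : A) : {y : A // y ≠ a} ≃ A.erase a where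
  toFun y := ⟨y.1, mem_erase.2 ⟨fun h => y.2 (Subtype.ext h), y.1.2⟩⟩
  invFun x := ⟨⟨x, mem_of_mem_erase x.2⟩, fun h => ne_of_mem_erase x.2 (congrArg Subtype.val h)⟩
  left_inv _ := rfl
  right_inv _ := rfl

lemma orderingSum_eq_mul_sum_erase (w : Finset β → M) {A : Finset β} (hA : A.Nonempty) :
    orderingSum w A = w A * ∑ a ∈ A, orderingSum w (A.erase a) := by
  obtain ⟨n, hn⟩ := Nat.exists_eq_succ_of_ne_zero hA.card_pos.ne'
  rw [orderingSum_eq_sum_equiv w A (Equiv.refl _) hn, Fintype.sum_equiv_finSucc, mul_sum,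
    ← sum_coe_sort A]
  refine sum_congr rfl fun a _ => ?_
  rw [orderingSum_eq_sum_equiv w _ (subtypeNeEquivErase A a)
    (by rw [card_erase_of_mem a.2, hn]), mul_sum]
  refine sum_congr rfl fun e _ => ?_
  simp only [Equiv.refl_apply]
  rw [orderingWeight_succ, image_val_equiv_univ, mul_comm]
  congr 2
  ext k
  simp [subtypeNeEquivErase]

end OrderingSum

lemma ratioPot_empty {d : ℕ} (v : Finset (Fin d) → ℝ) : ratioPot v ∅ = 1 := by
  rw [ratioPot, if_pos rfl]

lemma inv_ratioPot {d : ℕ} (v : Finset (Fin d) → ℝ) {A : Finset (Fin d)} (hA : A.Nonempty) :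
    (ratioPot v A)⁻¹ = (v A)⁻¹ * ∑ j ∈ A, (ratioPot v (A.erase j))⁻¹ := by
  rw [ratioPot, if_neg hA.ne_empty, mul_inv, inv_inv,
    sum_attach A fun j => (ratioPot v (A.erase j))⁻¹]

theorem inv_ratioPot_eq_orderingSum {d : ℕ} (v : Finset (Fin d) → ℝ) (A : Finset (Fin d)) :
    (ratioPot v A)⁻¹ = orderingSum (fun s => (v s)⁻¹) A := by
  induction A using Finset.strongInduction with
  | H A ih =>
    obtain rfl | hA := A.eq_empty_or_nonempty
    · simp [ratioPot_empty]
    · rw [inv_ratioPot v hA, orderingSum_eq_mul_sum_erase _ hA]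
      exact congrArg _ (sum_congr rfl fun a ha => ih _ (erase_ssubset ha))

lemma orderingSum_eq_sum_prod_subPermCoal {d : ℕ} {M : Type*} [CommSemiring M]
    (w : Finset (Fin d) → M) (A : Finset (Fin d)) {n : ℕ} (hn : A.card = n) :
    orderingSum w A = ∑ e : Fin A.card ≃ A, ∏ j ∈ range n, w (subPermCoal A e (j + 1)) := by
  subst hn
  rfl

theorem ratioPot_inv_perm_expansion_general {d : ℕ} (v : Finset (Fin d) → ℝ) :
    (∀ A : Finset (Fin d), A ≠ ∅ →
      (ratioPot v A)⁻¹ =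
        ∑ e : Fin A.card ≃ {x // x ∈ A},
          ∏ j ∈ Finset.range A.card, (v (subPermCoal A e (j + 1)))⁻¹) ∧
    (∀ i : Fin d,
      ratioPot v Finset.univ / ratioPot v (Finset.univ.erase i) =
        (∑ e : Fin (Finset.univ.erase i).card ≃ {x // x ∈ Finset.univ.erase i},
            ∏ j ∈ Finset.range (d - 1), (v (subPermCoal (Finset.univ.erase i) e (j + 1)))⁻¹) /
        (∑ e : Fin (Finset.univ : Finset (Fin d)).card ≃
              {x // x ∈ (Finset.univ : Finset (Fin d))},
            ∏ j ∈ Finset.range d, (v (subPermCoal Finset.univ e (j + 1)))⁻¹)) := by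
  refine ⟨fun A _ => inv_ratioPot_eq_orderingSum v A, fun i => ?_⟩
  rw [← inv_div_inv, inv_ratioPot_eq_orderingSum, inv_ratioPot_eq_orderingSum,
    orderingSum_eq_sum_prod_subPermCoal _ _ (card_fin d),
    orderingSum_eq_sum_prod_subPermCoal _ _ (by rw [card_erase_of_mem (mem_univ i), card_fin])]

/-- for a positive cooperative game, the inverse of the ratio potential admits
the permutation expansion `R(A,v)⁻¹ = Σ_{π ∈ S_A} Π_{j=1}^{|A|} v(C_j(π))⁻¹`; consequently,
the proportional value `PV_i(D,v) = R(D,v)/R(D\{i},v)` is the ratio of the corresponding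
sums over the permutations of `D\{i}` and of `D`. -/
theorem ratioPot_inv_perm_expansion {d : ℕ} (v : Finset (Fin d) → ℝ) (hv0 : v ∅ = 0)
    (hpos : ∀ A : Finset (Fin d), A ≠ ∅ → 0 < v A) :
    (∀ A : Finset (Fin d), A ≠ ∅ →
      (ratioPot v A)⁻¹ =
        ∑ e : Fin A.card ≃ {x // x ∈ A},
          ∏ j ∈ Finset.range A.card, (v (subPermCoal A e (j + 1)))⁻¹) ∧
    (∀ i : Fin d,
      ratioPot v Finset.univ / ratioPot v (Finset.univ.erase i) =
        (∑ e : Fin (Finset.univ.erase i).card ≃ {x // x ∈ Finset.univ.erase i},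
            ∏ j ∈ Finset.range (d - 1), (v (subPermCoal (Finset.univ.erase i) e (j + 1)))⁻¹) /
        (∑ e : Fin (Finset.univ : Finset (Fin d)).card ≃
              {x // x ∈ (Finset.univ : Finset (Fin d))},
            ∏ j ∈ Finset.range d, (v (subPermCoal Finset.univ e (j + 1)))⁻¹)) :=
  ratioPot_inv_perm_expansion_general v
end

section
/- Let (D,v) be a nonnegative monotonic cooperative game with v(D) > 0, and suppose there is a nonempty proper subset E ⊊ D such that v(B) = 0 for every B ⊆ E, and v(A) > 0 for every A ⊆ D with |A| ≥ |E| and A ≠ E. Then the extended proportional values satisfy PV⁰_i = 0 for every i ∈ E and PV⁰_j > 0 for every j ∈ D\E. -/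
/-!
No coalition larger than `E` is null and no other coalition of size `|E|` is, so `E` is the only
null coalition of maximal size: `𝒦 = {E}`. Hence `PV⁰` vanishes on `E`, and off `E` it is a
quotient of inverse ratio potentials of `v_E`, which are positive because `v_E` is positive on
every nonempty coalition disjoint from `E`.
-/

open Finset

-- The coalitions with null value.
open scoped Classical in
noncomputable def nullCoalitions {d : ℕ} (v : Finset (Fin d) → ℝ) : Finset (Finset (Fin d)) :=
  Finset.univ.filter (fun A => v A = 0)

/-- `k_max`: the cardinal of the largest null coalition. -/
noncomputable def kmax {d : ℕ} (v : Finset (Fin d) → ℝ) : ℕ :=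
  (nullCoalitions v).sup Finset.card

-- `𝒦`: the set of null coalitions of cardinal `k_max`.
open scoped Classical in
noncomputable def maxNullCoalitions {d : ℕ} (v : Finset (Fin d) → ℝ) :
    Finset (Finset (Fin d)) :=
  (nullCoalitions v).filter (fun A => A.card = kmax v)

-- `𝒦_{-i}`: the set of null coalitions of `D\{i}` of cardinal `k_max`.
open scoped Classical in
noncomputable def maxNullCoalitionsAvoiding {d : ℕ} (v : Finset (Fin d) → ℝ) (i : Fin d) :
    Finset (Finset (Fin d)) :=
  (maxNullCoalitions v).filter (fun A => i ∉ A)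

-- `PV⁰_i`: the extended proportional value of player `i` for a nonnegative monotonic
-- cooperative game, where `v_A(B) = v(A ∪ B)`.
open scoped Classical in
noncomputable def PV0 {d : ℕ} (v : Finset (Fin d) → ℝ) (i : Fin d) : ℝ :=
  if ∀ A ∈ maxNullCoalitions v, i ∈ A then 0
  else
    (∑ A ∈ maxNullCoalitionsAvoiding v i,
        (ratioPot (fun B => v (A ∪ B)) ((Finset.univ.erase i) \ A))⁻¹) /
    (∑ A ∈ maxNullCoalitions v, (ratioPot (fun B => v (A ∪ B)) (Finset.univ \ A))⁻¹)

lemma ratioPot_pos {d : ℕ} {w : Finset (Fin d) → ℝ} {A : Finset (Fin d)}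
    (h : ∀ B ⊆ A, B.Nonempty → 0 < w B) : 0 < ratioPot w A := by
  induction A using Finset.strongInduction with
  | _ A ih =>
    rw [ratioPot]
    split_ifs with hA
    · exact one_pos
    · have hAne : A.Nonempty := nonempty_iff_ne_empty.2 hA
      refine mul_pos (h A subset_rfl hAne) (inv_pos.2 (sum_pos (fun j _ => inv_pos.2 ?_)
        (attach_nonempty_iff.2 hAne)))
      exact ih _ (erase_ssubset j.2) fun B hB => h B (hB.trans (erase_subset _ _))

section MaxNullCoalitions

variable {d : ℕ} {v : Finset (Fin d) → ℝ} {E : Finset (Fin d)}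

lemma mem_nullCoalitions {A : Finset (Fin d)} : A ∈ nullCoalitions v ↔ v A = 0 := by
  simp [nullCoalitions]

lemma kmax_eq_card (hE : v E = 0) (hother : ∀ A, E.card ≤ A.card → A ≠ E → v A ≠ 0) :
    kmax v = E.card := by
  refine le_antisymm (Finset.sup_le fun A hA => ?_) (le_sup (mem_nullCoalitions.2 hE))
  by_contra! hlt
  exact hother A hlt.le (fun h => by simp [h] at hlt) (mem_nullCoalitions.1 hA)

lemma maxNullCoalitions_eq_singleton (hE : v E = 0)
    (hother : ∀ A, E.card ≤ A.card → A ≠ E → v A ≠ 0) : maxNullCoalitions v = {E} := by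
  ext A
  simp only [maxNullCoalitions, mem_filter, mem_nullCoalitions, kmax_eq_card hE hother,
    mem_singleton]
  constructor
  · rintro ⟨hA, hcard⟩
    by_contra hne
    exact hother A hcard.ge hne hA
  · rintro rfl
    exact ⟨hE, rfl⟩

lemma PV0_eq_zero_of_mem (hK : maxNullCoalitions v = {E}) {i : Fin d} (hi : i ∈ E) :
    PV0 v i = 0 := by
  rw [PV0, if_pos]
  simpa [hK] using hi

lemma PV0_eq_of_notMem (hK : maxNullCoalitions v = {E}) {j : Fin d} (hj : j ∉ E) :
    PV0 v j = (ratioPot (fun B => v (E ∪ B)) (univ.erase j \ E))⁻¹ /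
      (ratioPot (fun B => v (E ∪ B)) (univ \ E))⁻¹ := by
  have hK' : maxNullCoalitionsAvoiding v j = {E} := by
    rw [maxNullCoalitionsAvoiding, hK, filter_singleton, if_pos hj]
  rw [PV0, if_neg (by simpa [hK] using hj), hK', hK, sum_singleton, sum_singleton]

lemma ratioPot_union_sdiff_pos
    (hpos : ∀ A : Finset (Fin d), E.card ≤ A.card → A ≠ E → 0 < v A) (A : Finset (Fin d)) :
    0 < ratioPot (fun B => v (E ∪ B)) (A \ E) := by
  refine ratioPot_pos fun B hB ⟨x, hx⟩ => hpos _ (card_le_card subset_union_left) fun h => ?_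
  have hxE : x ∈ E := h ▸ mem_union_right E hx
  exact (mem_sdiff.1 (hB hx)).2 hxE

end MaxNullCoalitions

theorem pv0_exogeneity_general {d : ℕ} (v : Finset (Fin d) → ℝ) (E : Finset (Fin d))
    (hnull : ∀ B ⊆ E, v B = 0)
    (hpos : ∀ A : Finset (Fin d), E.card ≤ A.card → A ≠ E → 0 < v A) :
    (∀ i ∈ E, PV0 v i = 0) ∧ (∀ j ∉ E, 0 < PV0 v j) := by
  have hK : maxNullCoalitions v = {E} :=
    maxNullCoalitions_eq_singleton (hnull E subset_rfl) fun A hcard hA => (hpos A hcard hA).ne'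
  refine ⟨fun i hi => PV0_eq_zero_of_mem hK hi, fun j hj => ?_⟩
  rw [PV0_eq_of_notMem hK hj]
  exact div_pos (inv_pos.2 (ratioPot_union_sdiff_pos hpos _))
    (inv_pos.2 (ratioPot_union_sdiff_pos hpos _))

/-- For a nonnegative monotonic cooperative game `(D, v)` with `v(D) > 0`, if
`E ⊊ D` is nonempty, `v(B) = 0` for every `B ⊆ E`, and `v(A) > 0` for every `A ⊆ D` with
`|A| ≥ |E|` and `A ≠ E`, then `PV⁰_i = 0` for every `i ∈ E` and `PV⁰_j > 0` for every
`j ∈ D\E`. -/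
theorem pv0_exogeneity {d : ℕ} (v : Finset (Fin d) → ℝ) (hv0 : v ∅ = 0)
    (hnonneg : ∀ A : Finset (Fin d), 0 ≤ v A)
    (hmono : ∀ T A : Finset (Fin d), T ⊆ A → v T ≤ v A)
    (hD : 0 < v Finset.univ)
    (E : Finset (Fin d)) (hEne : E.Nonempty) (hEproper : E ⊂ Finset.univ)
    (hnull : ∀ B ⊆ E, v B = 0)
    (hpos : ∀ A : Finset (Fin d), E.card ≤ A.card → A ≠ E → 0 < v A) :
    (∀ i ∈ E, PV0 v i = 0) ∧ (∀ j ∉ E, 0 < PV0 v j) :=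
  pv0_exogeneity_general v E hnull hpos
end
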